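/- Law of total expectation over propensity strata: under unconfoundedness given a balancing score b with finitely many values, the average treatment effect for binary treatments satisfies E[Y(1) − Y(0)] = Σ_s P(b(X) = s) · (E[Y(T) | T = 1, b(X) = s] − E[Y(T) | T = 0, b(X) = s]), where the sum is over strata s with positive probability and overlap holds within each stratum. -/

import Mathlib

open scoped Classical

noncomputable def Pr {Ω : Type*} [Fintype Ω] (μ : Ω → ℝ) (A : Ω → Prop) : ℝ :=
  ∑ ω, if A ω then μ ω else 0

noncomputable def CondPr {Ω : Type*} [Fintype Ω] (μ : Ω → ℝ) (A B : Ω → Prop) : ℝ :=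
  Pr μ (fun ω => A ω ∧ B ω) / Pr μ B

noncomputable def CE {Ω : Type*} [Fintype Ω] (μ : Ω → ℝ) (f : Ω → ℝ) (A : Ω → Prop) : ℝ :=
  (∑ ω, if A ω then f ω * μ ω else 0) / Pr μ A

/-!
Split the population into the strata `b(X) = s`. Conditional independence of `Y(t)` and `T`
given a stratum of positive probability, together with overlap, makes the mean of `Y(T) = Y(t)`
over the treated (resp. control) units of the stratum equal to the mean of `Y(t)` over the whole
stratum. Weighting by the stratum probabilities and summing recovers `E[Y(t)]`, because strata
of probability zero carry no mass.
-/

section FiniteProbability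

variable {Ω : Type*} [Fintype Ω] (μ : Ω → ℝ)

theorem Pr_nonneg (hμ : ∀ ω, 0 ≤ μ ω) (A : Ω → Prop) : 0 ≤ Pr μ A :=
  Finset.sum_nonneg fun ω _ => by split_ifs <;> simp [hμ ω]

theorem sum_ite_mul_eq_zero_of_Pr_eq_zero (hμ : ∀ ω, 0 ≤ μ ω) {A : Ω → Prop}
    (hA : Pr μ A = 0) (f : Ω → ℝ) : (∑ ω, if A ω then f ω * μ ω else 0) = 0 := by
  have hμA : ∀ ω, A ω → μ ω = 0 := fun ω hω => by
    simpa [hω] using (Finset.sum_eq_zero_iff_of_nonneg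
      (fun ω _ => by split_ifs <;> simp [hμ ω])).1 hA ω (Finset.mem_univ ω)
  exact Finset.sum_eq_zero fun ω _ => by split_ifs with hω <;> simp [hμA ω, *]

theorem sum_ite_mul_eq_sum_image_mul_Pr (f : Ω → ℝ) (A : Ω → Prop) :
    (∑ ω, if A ω then f ω * μ ω else 0)
      = ∑ y ∈ Finset.univ.image f, y * Pr μ (fun ω => f ω = y ∧ A ω) := by
  simp_rw [Pr, Finset.mul_sum]
  rw [Finset.sum_comm]
  refine Finset.sum_congr rfl fun ω _ => ?_
  by_cases hω : A ω
  · simp [hω, mul_ite, Finset.sum_ite_eq, Finset.mem_image_of_mem f (Finset.mem_univ ω)]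
  · simp [hω]

theorem Pr_mul_CE {B : Ω → Prop} (hB : Pr μ B ≠ 0) (f : Ω → ℝ) :
    Pr μ B * CE μ f B = ∑ ω, if B ω then f ω * μ ω else 0 :=
  mul_div_cancel₀ _ hB

theorem CE_congr {f g : Ω → ℝ} {A : Ω → Prop} (hfg : ∀ ω, A ω → f ω = g ω) :
    CE μ f A = CE μ g A := by
  unfold CE
  congr 1
  exact Finset.sum_congr rfl fun ω _ => by split_ifs with hω <;> simp [hfg ω, *]

theorem Pr_and_mul_Pr_eq_of_condPr {A C B : Ω → Prop} (hB : Pr μ B ≠ 0)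
    (hAC : CondPr μ (fun ω => A ω ∧ C ω) B = CondPr μ A B * CondPr μ C B) :
    Pr μ (fun ω => A ω ∧ C ω ∧ B ω) * Pr μ B
      = Pr μ (fun ω => A ω ∧ B ω) * Pr μ (fun ω => C ω ∧ B ω) := by
  simp only [CondPr, and_assoc] at hAC
  field_simp at hAC
  exact hAC

theorem CE_and_eq_of_condIndep {f : Ω → ℝ} {A B : Ω → Prop} (hB : Pr μ B ≠ 0)
    (hAB : Pr μ (fun ω => A ω ∧ B ω) ≠ 0)
    (hind : ∀ y, CondPr μ (fun ω => f ω = y ∧ A ω) B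
      = CondPr μ (fun ω => f ω = y) B * CondPr μ A B) :
    CE μ f (fun ω => A ω ∧ B ω) = CE μ f B := by
  have hvalue : ∀ y, Pr μ (fun ω => f ω = y ∧ A ω ∧ B ω)
      = Pr μ (fun ω => f ω = y ∧ B ω) * Pr μ (fun ω => A ω ∧ B ω) / Pr μ B := fun y => by
    rw [eq_div_iff hB]
    exact Pr_and_mul_Pr_eq_of_condPr μ hB (hind y)
  rw [CE, CE, div_eq_div_iff hAB hB, sum_ite_mul_eq_sum_image_mul_Pr,
    sum_ite_mul_eq_sum_image_mul_Pr, Finset.sum_mul, Finset.sum_mul]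
  refine Finset.sum_congr rfl fun y _ => ?_
  rw [hvalue y]
  field_simp

theorem sum_sum_ite_of_Pr_pos {ℬ : Type*} [Fintype ℬ] (hμ : ∀ ω, 0 ≤ μ ω) (β : Ω → ℬ)
    (f : Ω → ℝ) :
    (∑ s ∈ Finset.univ.filter (fun s : ℬ => 0 < Pr μ (fun ω => β ω = s)),
        ∑ ω, if β ω = s then f ω * μ ω else 0)
      = ∑ ω, f ω * μ ω := by
  rw [Finset.sum_filter_of_ne, Finset.sum_comm]
  · exact Finset.sum_congr rfl fun ω _ => by simp
  · intro s _ hne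
    refine (Pr_nonneg μ hμ _).lt_of_ne fun hs => hne ?_
    exact sum_ite_mul_eq_zero_of_Pr_eq_zero μ hμ hs.symm f

end FiniteProbability

theorem stmt_17_general {Ω 𝒳 ℬ : Type*} [Fintype Ω] [Fintype ℬ]
    (μ : Ω → ℝ) (hμ : ∀ ω, 0 ≤ μ ω)
    (X : Ω → 𝒳) (T : Ω → Bool) (Y : Bool → Ω → ℝ) (b : 𝒳 → ℬ)
    -- Unconfoundedness given the balancing score: Y(t) ⟂ T | b(X) for each t.
    (hU : ∀ (t : Bool) (y : ℝ) (s : ℬ), 0 < Pr μ (fun ω => b (X ω) = s) →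
      CondPr μ (fun ω => Y t ω = y ∧ T ω = t) (fun ω => b (X ω) = s)
        = CondPr μ (fun ω => Y t ω = y) (fun ω => b (X ω) = s)
          * CondPr μ (fun ω => T ω = t) (fun ω => b (X ω) = s))
    -- Overlap within every stratum of positive probability
    (hO : ∀ (t : Bool) (s : ℬ), 0 < Pr μ (fun ω => b (X ω) = s) →
      0 < Pr μ (fun ω => T ω = t ∧ b (X ω) = s)) :
    ∑ ω, (Y true ω - Y false ω) * μ ω
      = ∑ s ∈ Finset.univ.filter (fun s : ℬ => 0 < Pr μ (fun ω => b (X ω) = s)),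
          Pr μ (fun ω => b (X ω) = s) *
            (CE μ (fun ω => Y (T ω) ω) (fun ω => T ω = true ∧ b (X ω) = s)
              - CE μ (fun ω => Y (T ω) ω) (fun ω => T ω = false ∧ b (X ω) = s)) := by
  have hstratum : ∀ t s, 0 < Pr μ (fun ω => b (X ω) = s) →
      Pr μ (fun ω => b (X ω) = s)
          * CE μ (fun ω => Y (T ω) ω) (fun ω => T ω = t ∧ b (X ω) = s)
        = ∑ ω, if b (X ω) = s then Y t ω * μ ω else 0 := fun t s hs => by
    rw [CE_congr μ (g := Y t) fun ω hω => by rw [hω.1],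
      CE_and_eq_of_condIndep μ hs.ne' (hO t s hs).ne' (fun y => hU t y s hs),
      Pr_mul_CE μ hs.ne']
  simp_rw [sub_mul, Finset.sum_sub_distrib, mul_sub]
  rw [← sum_sum_ite_of_Pr_pos μ hμ (fun ω => b (X ω)) (Y true),
    ← sum_sum_ite_of_Pr_pos μ hμ (fun ω => b (X ω)) (Y false), ← Finset.sum_sub_distrib]
  refine Finset.sum_congr rfl fun s hs => ?_
  have hs' := (Finset.mem_filter.1 hs).2
  rw [hstratum true s hs', hstratum false s hs']

theorem stmt_17 {Ω 𝒳 ℬ : Type*} [Fintype Ω] [Fintype 𝒳] [Fintype ℬ]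
    (μ : Ω → ℝ) (hμ : ∀ ω, 0 ≤ μ ω) (hμ1 : ∑ ω, μ ω = 1)
    (X : Ω → 𝒳) (T : Ω → Bool) (Y : Bool → Ω → ℝ) (b : 𝒳 → ℬ)
    -- Unconfoundedness given the balancing score: Y(t) ⟂ T | b(X) for each t.
    (hU : ∀ (t : Bool) (y : ℝ) (s : ℬ), 0 < Pr μ (fun ω => b (X ω) = s) →
      CondPr μ (fun ω => Y t ω = y ∧ T ω = t) (fun ω => b (X ω) = s)
        = CondPr μ (fun ω => Y t ω = y) (fun ω => b (X ω) = s)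
          * CondPr μ (fun ω => T ω = t) (fun ω => b (X ω) = s))
    -- Overlap within every stratum of positive probability
    (hO : ∀ (t : Bool) (s : ℬ), 0 < Pr μ (fun ω => b (X ω) = s) →
      0 < Pr μ (fun ω => T ω = t ∧ b (X ω) = s)) :
    ∑ ω, (Y true ω - Y false ω) * μ ω
      = ∑ s ∈ Finset.univ.filter (fun s : ℬ => 0 < Pr μ (fun ω => b (X ω) = s)),
          Pr μ (fun ω => b (X ω) = s) *
            (CE μ (fun ω => Y (T ω) ω) (fun ω => T ω = true ∧ b (X ω) = s)
              - CE μ (fun ω => Y (T ω) ω) (fun ω => T ω = false ∧ b (X ω) = s)) :=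
  stmt_17_general μ hμ X T Y b hU hO
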